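/- arXiv:2311.16325 — 5 statements merged into one kernel-verified Lean document; each statement's English description precedes it below -/
import Mathlib

section
/- Every degree-preserving differential operator V with matrix polynomial coefficients is not a zero divisor in the algebra of matrix differential operators: if V D = 0 or D V = 0 for a matrix differential operator D with polynomial coefficients, then D = 0. -/
open Polynomial Matrix MeasureTheory
open scoped ComplexOrder

/-- Matrix polynomials: square matrices with polynomial entries. -/
abbrev MatP (n : Type*) := Matrix n n (Polynomial ℂ)

section MatFramework
variable {n : Type*} [Fintype n] [DecidableEq n]

/-- Entrywise `j`-th derivative of a matrix polynomial. -/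
noncomputable def derivIter (j : ℕ) (P : MatP n) : MatP n :=
  P.map (fun p => Polynomial.derivative^[j] p)

/-- Right action of the differential operator `∑_j ∂^j F j` on a matrix polynomial:
`P · D = ∑_j P^{(j)} F_j`. -/
noncomputable def actOp (F : ℕ →₀ MatP n) (P : MatP n) : MatP n :=
  F.sum fun j Fj => derivIter j P * Fj

/-- A map on matrix polynomials is a matrix differential operator with polynomial
coefficients if it is given by some `∑_j ∂^j F_j`. -/
def IsDiffOp (L : MatP n → MatP n) : Prop :=
  ∃ F : ℕ →₀ MatP n, ∀ P, L P = actOp F P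

/-- Degree of a matrix polynomial: the sup of the degrees of its entries. -/
noncomputable def matDeg (P : MatP n) : WithBot ℕ :=
  Finset.univ.sup fun ij : n × n => (P ij.1 ij.2).degree

/-- A differential operator is degree-preserving if `deg (P · V) = deg P` for all `P`. -/
def DegPres (L : MatP n → MatP n) : Prop :=
  IsDiffOp L ∧ ∀ P, matDeg (L P) = matDeg P

/-- Natural-number degree of a matrix polynomial. -/
noncomputable def matNatDeg (P : MatP n) : ℕ :=
  Finset.univ.sup fun ij : n × n => (P ij.1 ij.2).natDegree

/-- Leading coefficient of a matrix polynomial. -/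
noncomputable def matLead (P : MatP n) : Matrix n n ℂ :=
  Matrix.of fun i j => (P i j).coeff (matNatDeg P)

/-- Evaluation of a matrix polynomial at a real point. -/
noncomputable def evalMP (P : MatP n) (x : ℝ) : Matrix n n ℂ :=
  Matrix.of fun i j => (P i j).eval (x : ℂ)

/-- The matrix-valued inner product `⟨P,Q⟩ = ∫_S P(x) W(x) Q(x)^* dx`. -/
noncomputable def wInner (S : Set ℝ) (W : ℝ → Matrix n n ℂ) (P Q : MatP n) :
    Matrix n n ℂ :=
  Matrix.of fun i j => ∫ x in S, (evalMP P x * W x * (evalMP Q x)ᴴ) i j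

/-- `W` is a weight matrix supported on `S`: positive definite on `S` with finite moments. -/
def IsWeight (S : Set ℝ) (W : ℝ → Matrix n n ℂ) : Prop :=
  MeasurableSet S ∧ volume S ≠ 0 ∧ (∀ x ∈ S, (W x).PosDef) ∧
  ∀ (k : ℕ) (i j : n), IntegrableOn (fun x => ‖W x i j‖ * |x| ^ k) S

/-- `P` is the sequence of monic orthogonal matrix polynomials for the weight `W` on `S`. -/
def MonicOPS (S : Set ℝ) (W : ℝ → Matrix n n ℂ) (P : ℕ → MatP n) : Prop :=
  (∀ k, matNatDeg (P k) = k) ∧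
  (∀ k, (Matrix.of fun i j => ((P k) i j).coeff k) = (1 : Matrix n n ℂ)) ∧
  (∀ k l, k ≠ l → wInner S W (P k) (P l) = 0)

/-- Membership in the algebra `D(W)`: a differential operator having the (monic orthogonal)
polynomials `P_k` as eigenfunctions with matrix eigenvalues. -/
def InDW (P : ℕ → MatP n) (L : MatP n → MatP n) : Prop :=
  IsDiffOp L ∧ ∀ k, ∃ Λ : Matrix n n ℂ, L (P k) = Λ.map Polynomial.C * P k

/-- `Pt` (the monic OPS of `W̃`) is obtained from `P` (the monic OPS of `W`) by a Darboux
transformation: some `D = V N ∈ D(W)` with `V, N` degree-preserving and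
`P_k · V = A_k P̃_k`, `A_k` nonsingular. -/
def IsDarbouxPair (P Pt : ℕ → MatP n) : Prop :=
  ∃ V Nd : MatP n → MatP n, DegPres V ∧ DegPres Nd ∧
    InDW P (fun Q => Nd (V Q)) ∧
    ∀ k, ∃ A : Matrix n n ℂ, IsUnit A ∧ V (P k) = A.map Polynomial.C * Pt k

end MatFramework

section Aux
variable {n : Type*} [Fintype n] [DecidableEq n]

private lemma iterDeriv_add (j : ℕ) (p q : Polynomial ℂ) :
    Polynomial.derivative^[j] (p + q) =
      Polynomial.derivative^[j] p + Polynomial.derivative^[j] q := by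
  induction j generalizing p q with
  | zero => simp
  | succ j ih => simp [Function.iterate_succ_apply, map_add, ih]

private lemma iterDeriv_smul (j : ℕ) (c : ℂ) (p : Polynomial ℂ) :
    Polynomial.derivative^[j] (c • p) = c • Polynomial.derivative^[j] p := by
  induction j generalizing p with
  | zero => simp
  | succ j ih => simp [Function.iterate_succ_apply, ih]

/-- `actOp F` as a `ℂ`-linear map. -/
noncomputable def actOpLin (F : ℕ →₀ MatP n) : MatP n →ₗ[ℂ] MatP n where
  toFun := actOp F
  map_add' P Q := by
    simp only [actOp, Finsupp.sum]
    rw [← Finset.sum_add_distrib]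
    refine Finset.sum_congr rfl fun j _ => ?_
    rw [← add_mul]
    congr 1
    ext i k
    simp [derivIter, iterDeriv_add]
  map_smul' c P := by
    simp only [actOp, Finsupp.sum, RingHom.id_apply, Finset.smul_sum]
    refine Finset.sum_congr rfl fun j _ => ?_
    rw [← smul_mul_assoc]
    congr 1
    ext i k
    simp [derivIter, iterDeriv_smul]

private lemma entry_degree_le_matDeg (P : MatP n) (i j : n) :
    (P i j).degree ≤ matDeg P :=
  Finset.le_sup (f := fun ij : n × n => (P ij.1 ij.2).degree) (Finset.mem_univ (i, j))

private lemma matDeg_le_iff {P : MatP n} {d : WithBot ℕ} :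
    matDeg P ≤ d ↔ ∀ i j, (P i j).degree ≤ d := by
  simp [matDeg, Finset.sup_le_iff, Prod.forall]

private lemma matDeg_eq_bot {P : MatP n} : matDeg P = ⊥ ↔ P = 0 := by
  simp only [matDeg, Finset.sup_eq_bot_iff, Finset.mem_univ, true_implies, Prod.forall,
    Polynomial.degree_eq_bot]
  constructor
  · intro h; funext i j; simpa using h i j
  · intro h i j; simp [h]

/-- entrywise coefficient extraction as a linear map -/
noncomputable def coeffLin (m : ℕ) : MatP n →ₗ[ℂ] Matrix n n ℂ where
  toFun P := Matrix.of fun i j => (P i j).coeff m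
  map_add' P Q := by ext i j; simp [Matrix.add_apply]
  map_smul' c P := by ext i j; simp [Matrix.smul_apply, Polynomial.coeff_smul]

/-- `A ↦ A * X^m` entrywise, as a linear map -/
noncomputable def embLin (m : ℕ) : Matrix n n ℂ →ₗ[ℂ] MatP n where
  toFun A := Matrix.of fun i j => Polynomial.C (A i j) * Polynomial.X ^ m
  map_add' A B := by ext i j; simp [Matrix.add_apply, add_mul]
  map_smul' c A := by
    ext i j
    simp [Matrix.smul_apply, Polynomial.smul_eq_C_mul, mul_assoc]

private lemma embLin_deg_le (m : ℕ) (A : Matrix n n ℂ) :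
    matDeg (embLin (n := n) m A) ≤ (m : WithBot ℕ) := by
  rw [matDeg_le_iff]
  intro i j
  exact Polynomial.degree_C_mul_X_pow_le m (A i j)

private lemma embLin_deg_eq (m : ℕ) {A : Matrix n n ℂ} (hA : A ≠ 0) :
    matDeg (embLin (n := n) m A) = (m : WithBot ℕ) := by
  refine le_antisymm (embLin_deg_le m A) ?_
  obtain ⟨i, j, hij⟩ : ∃ i j, A i j ≠ 0 := by
    by_contra hc
    push_neg at hc
    exact hA (by ext i j; simp [hc])
  have h1 : ((embLin (n := n) m A) i j).degree = (m : WithBot ℕ) := by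
    simpa [embLin] using Polynomial.degree_C_mul_X_pow m hij
  calc (m : WithBot ℕ) = ((embLin (n := n) m A) i j).degree := h1.symm
    _ ≤ _ := entry_degree_le_matDeg _ i j

private lemma embLin_coeff (m : ℕ) (A : Matrix n n ℂ) (i j : n) :
    ((embLin (n := n) m A) i j).coeff m = A i j := by
  simp [embLin, Polynomial.coeff_C_mul, Polynomial.coeff_X_pow]

private lemma withBot_lt_succ {x : WithBot ℕ} {m : ℕ} :
    x < ((m + 1 : ℕ) : WithBot ℕ) ↔ x ≤ (m : WithBot ℕ) := by
  cases x with
  | bot => exact iff_of_true (by exact_mod_cast WithBot.bot_lt_coe (m + 1)) bot_le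
  | coe k =>
    rw [Nat.cast_withBot, Nat.cast_withBot, WithBot.coe_lt_coe, WithBot.coe_le_coe]
    exact Nat.lt_succ_iff

/-- A degree-preserving differential operator is surjective. -/
lemma degPres_surjective (V : MatP n → MatP n) (hV : DegPres V) :
    Function.Surjective V := by
  obtain ⟨⟨F, hF⟩, hdeg⟩ := hV
  set L : MatP n →ₗ[ℂ] MatP n := actOpLin F with hL
  have hLV : ∀ P, L P = V P := fun P => (hF P).symm
  -- the "leading coefficient" maps
  set lam : ℕ → Matrix n n ℂ →ₗ[ℂ] Matrix n n ℂ :=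
    fun m => (coeffLin m).comp (L.comp (embLin m)) with hlam
  have hinj : ∀ m, Function.Injective (lam m) := by
    intro m
    rw [injective_iff_map_eq_zero]
    intro A hA0
    by_contra hA
    have hdegP : matDeg (V (embLin (n := n) m A)) = (m : WithBot ℕ) := by
      rw [hdeg, embLin_deg_eq m hA]
    have hlt : matDeg (V (embLin (n := n) m A)) < (m : WithBot ℕ) := by
      have hbot : (⊥ : WithBot ℕ) < (m : WithBot ℕ) := WithBot.bot_lt_coe m
      rw [matDeg, Finset.sup_lt_iff hbot]
      rintro ⟨i, j⟩ -
      have hle : ((V (embLin (n := n) m A)) i j).degree ≤ (m : WithBot ℕ) :=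
        hdegP ▸ entry_degree_le_matDeg _ i j
      have hc : ((V (embLin (n := n) m A)) i j).coeff m = 0 := by
        have := congrFun (congrFun hA0 i) j
        simpa [hlam, coeffLin, hLV] using this
      rw [Polynomial.degree_lt_iff_coeff_zero]
      intro k hk
      rcases eq_or_lt_of_le hk with hk' | hk'
      · have : k = m := by exact_mod_cast hk'.symm
        rwa [this]
      · exact Polynomial.coeff_eq_zero_of_degree_lt (lt_of_le_of_lt hle (by exact_mod_cast hk'))
    exact absurd hdegP (ne_of_lt hlt)
  have hsurj : ∀ m, Function.Surjective (lam m) := fun m =>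
    (LinearMap.injective_iff_surjective).mp (hinj m)
  -- main induction
  have key : ∀ m : ℕ, ∀ P : MatP n, matDeg P < (m : WithBot ℕ) → ∃ Q, L Q = P := by
    intro m
    induction m with
    | zero =>
      intro P hP
      have : matDeg P = ⊥ := by
        exact Nat.WithBot.lt_zero_iff.mp (by exact_mod_cast hP)
      refine ⟨0, ?_⟩
      rw [map_zero, (matDeg_eq_bot.mp this)]
    | succ m ih =>
      intro P hP
      rw [withBot_lt_succ] at hP
      set A : Matrix n n ℂ := coeffLin m P with hA
      obtain ⟨B, hB⟩ := hsurj m A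
      set P' : MatP n := P - L (embLin m B) with hP'
      have hVemb : matDeg (L (embLin (n := n) m B)) ≤ (m : WithBot ℕ) := by
        rw [hLV, hdeg]; exact embLin_deg_le m B
      have hP'lt : matDeg P' < (m : WithBot ℕ) := by
        have hbot : (⊥ : WithBot ℕ) < (m : WithBot ℕ) := WithBot.bot_lt_coe m
        rw [matDeg, Finset.sup_lt_iff hbot]
        rintro ⟨i, j⟩ -
        have hle1 : (P i j).degree ≤ (m : WithBot ℕ) :=
          le_trans (entry_degree_le_matDeg P i j) hP
        have hle2 : ((L (embLin (n := n) m B)) i j).degree ≤ (m : WithBot ℕ) :=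
          le_trans (entry_degree_le_matDeg _ i j) hVemb
        have hle : (P' i j).degree ≤ (m : WithBot ℕ) := by
          rw [hP']
          calc ((P - L (embLin m B)) i j).degree
              = ((P i j) - (L (embLin m B)) i j).degree := by rw [Matrix.sub_apply]
            _ ≤ max (P i j).degree ((L (embLin m B)) i j).degree :=
                Polynomial.degree_sub_le _ _
            _ ≤ (m : WithBot ℕ) := max_le hle1 hle2
        have hc : (P' i j).coeff m = 0 := by
          have h1 : ((L (embLin (n := n) m B)) i j).coeff m = A i j := by
            have := congrFun (congrFun hB i) j
            simpa [hlam, coeffLin] using this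
          have h2 : (P i j).coeff m = A i j := by simp [hA, coeffLin]
          rw [hP', Matrix.sub_apply, Polynomial.coeff_sub, h1, h2, sub_self]
        rw [Polynomial.degree_lt_iff_coeff_zero]
        intro k hk
        rcases eq_or_lt_of_le hk with hk' | hk'
        · have : k = m := by exact_mod_cast hk'.symm
          rwa [this]
        · exact Polynomial.coeff_eq_zero_of_degree_lt (lt_of_le_of_lt hle (by exact_mod_cast hk'))
      obtain ⟨Q', hQ'⟩ := ih P' hP'lt
      refine ⟨Q' + embLin m B, ?_⟩
      rw [map_add, hQ', hP']
      abel
  intro P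
  have hPdeg : matDeg P < ((matNatDeg P + 1 : ℕ) : WithBot ℕ) := by
    rw [withBot_lt_succ, matDeg_le_iff]
    intro i j
    calc (P i j).degree ≤ ((P i j).natDegree : WithBot ℕ) := Polynomial.degree_le_natDegree
      _ ≤ (matNatDeg P : WithBot ℕ) := by
          exact_mod_cast Nat.cast_le.mpr
            (Finset.le_sup (f := fun ij : n × n => (P ij.1 ij.2).natDegree)
              (Finset.mem_univ (i, j)))
  obtain ⟨Q, hQ⟩ := key _ P hPdeg
  exact ⟨Q, by rw [← hLV, hQ]⟩

/-- A degree-preserving differential operator is injective. -/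
lemma degPres_injective (V : MatP n → MatP n) (hV : DegPres V) {P : MatP n}
    (h : V P = 0) : P = 0 := by
  have := hV.2 P
  rw [h] at this
  have h0 : matDeg (0 : MatP n) = ⊥ := matDeg_eq_bot.mpr rfl
  rw [h0] at this
  exact matDeg_eq_bot.mp this.symm

end Aux

/-- A degree-preserving differential operator `V` is not a zero divisor
in the algebra of matrix differential operators: if `V D = 0` or `D V = 0` then `D = 0`.
(For right-acting operators, `P · (V D) = D-image of (P · V)`, i.e. apply `V` then `D`.) -/
theorem stmt2 {n : Type*} [Fintype n] [DecidableEq n]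
    (V D : MatP n → MatP n) (hV : DegPres V) (hD : IsDiffOp D)
    (h : (∀ P : MatP n, D (V P) = 0) ∨ (∀ P : MatP n, V (D P) = 0)) :
    ∀ P : MatP n, D P = 0 := by
  intro P
  rcases h with h | h
  · obtain ⟨Q, hQ⟩ := degPres_surjective V hV P
    rw [← hQ]; exact h Q
  · exact degPres_injective V hV (h P)
end

section
/- If a weight matrix W̃ is a Darboux transformation of W via D = VN ∈ D(W), then the operator D̃ = NV belongs to D(W̃), and consequently W is a Darboux transformation of W̃. -/
open Polynomial Matrix MeasureTheory
open scoped ComplexOrder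

/-!
Write `C A` for the constant matrix polynomial of a matrix `A`. From `P_k V = A_k P̃_k` and
`P_k V N = Λ_k P_k` one gets `P̃_k N = A_k⁻¹ Λ_k P_k` (differential operators acting on the
right commute with left multiplication by constants), hence `P̃_k N V = A_k⁻¹ Λ_k A_k P̃_k`, so
`N V` has the `P̃_k` as eigenfunctions. The matrix `B_k = A_k⁻¹ Λ_k` is invertible: otherwise
some `M ≠ 0` has `M B_k = 0`, so `N` kills `C M · P̃_k`, which is a nonzero polynomial since
`P̃_k` is monic; this contradicts that `N` preserves degrees.
-/

section DiffOp
variable {n : Type*}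

lemma derivIter_sum {ι : Type*} (j : ℕ) (s : Finset ι) (P : ι → MatP n) :
    derivIter j (∑ i ∈ s, P i) = ∑ i ∈ s, derivIter j (P i) := by
  ext a b : 1
  simp only [derivIter, Matrix.map_apply, Matrix.sum_apply]
  exact iterate_derivative_sum j s fun i => P i a b

lemma derivIter_derivIter (a b : ℕ) (P : MatP n) :
    derivIter a (derivIter b P) = derivIter (a + b) P := by
  ext i l : 1
  exact (Function.iterate_add_apply _ a b _).symm

variable [Fintype n]

lemma derivIter_mul (j : ℕ) (P Q : MatP n) :
    derivIter j (P * Q) =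
      ∑ t ∈ Finset.range (j + 1), j.choose t • (derivIter (j - t) P * derivIter t Q) := by
  ext i l : 1
  simp only [derivIter, Matrix.map_apply, Matrix.mul_apply, Matrix.sum_apply,
    Matrix.smul_apply, iterate_derivative_sum, iterate_derivative_mul, Finset.smul_sum]
  exact Finset.sum_comm

lemma derivIter_C_mul (j : ℕ) (A : Matrix n n ℂ) (Q : MatP n) :
    derivIter j (A.map C * Q) = A.map C * derivIter j Q := by
  ext i l : 1
  simp only [derivIter, Matrix.map_apply, Matrix.mul_apply, iterate_derivative_sum,
    iterate_derivative_C_mul]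

lemma actOp_single (k : ℕ) (G P : MatP n) :
    actOp (Finsupp.single k G) P = derivIter k P * G :=
  Finsupp.sum_single_index (mul_zero _)

lemma actOp_add (F G : ℕ →₀ MatP n) (P : MatP n) :
    actOp (F + G) P = actOp F P + actOp G P :=
  Finsupp.sum_add_index' (fun _ => mul_zero _) (fun _ _ _ => mul_add _ _ _)

lemma actOp_sum {ι : Type*} (s : Finset ι) (F : ι → ℕ →₀ MatP n) (P : MatP n) :
    actOp (∑ i ∈ s, F i) P = ∑ i ∈ s, actOp (F i) P :=
  map_sum (⟨⟨fun F => actOp F P, by simp [actOp]⟩, fun F G => actOp_add F G P⟩ :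
    (ℕ →₀ MatP n) →+ MatP n) F s

lemma actOp_C_mul (F : ℕ →₀ MatP n) (A : Matrix n n ℂ) (Q : MatP n) :
    actOp F (A.map C * Q) = A.map C * actOp F Q := by
  simp only [actOp, Finsupp.sum, Finset.mul_sum, derivIter_C_mul, mul_assoc]

/-- Coefficients of `actOp G ∘ actOp F`, read off from the Leibniz rule
`∂^j (P^{(i)} F_i) = ∑_t (j choose t) P^{(j-t+i)} F_i^{(t)}`. -/
noncomputable def compCoeffs (F G : ℕ →₀ MatP n) : ℕ →₀ MatP n :=
  ∑ j ∈ G.support, ∑ i ∈ F.support, ∑ t ∈ Finset.range (j + 1),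
    Finsupp.single (j - t + i) (j.choose t • (derivIter t (F i) * G j))

lemma actOp_actOp (F G : ℕ →₀ MatP n) (P : MatP n) :
    actOp G (actOp F P) = actOp (compCoeffs F G) P := by
  simp only [compCoeffs, actOp_sum, actOp_single]
  simp only [actOp, Finsupp.sum]
  refine Finset.sum_congr rfl fun j _ => ?_
  rw [derivIter_sum, Finset.sum_mul]
  refine Finset.sum_congr rfl fun i _ => ?_
  rw [derivIter_mul, Finset.sum_mul]
  refine Finset.sum_congr rfl fun t _ => ?_
  rw [derivIter_derivIter, smul_mul_assoc, mul_assoc, ← mul_smul_comm]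

lemma IsDiffOp.comp {L M : MatP n → MatP n} (hL : IsDiffOp L) (hM : IsDiffOp M) :
    IsDiffOp fun P => M (L P) := by
  obtain ⟨F, hF⟩ := hL
  obtain ⟨G, hG⟩ := hM
  exact ⟨compCoeffs F G, fun P => by simp only [hF, hG, actOp_actOp]⟩

lemma IsDiffOp.map_C_mul {L : MatP n → MatP n} (hL : IsDiffOp L) (A : Matrix n n ℂ)
    (Q : MatP n) : L (A.map C * Q) = A.map C * L Q := by
  obtain ⟨F, hF⟩ := hL
  rw [hF, hF, actOp_C_mul]

end DiffOp

section Degree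
variable {n : Type*} [Fintype n]

lemma matDeg_eq_bot_iff {Q : MatP n} : matDeg Q = ⊥ ↔ Q = 0 := by
  simp [matDeg, Finset.sup_eq_bot_iff, ← Matrix.ext_iff]

lemma DegPres.eq_zero_of_apply_eq_zero {L : MatP n → MatP n} (hL : DegPres L) {Q : MatP n}
    (h : L Q = 0) : Q = 0 :=
  matDeg_eq_bot_iff.1 (by rw [← hL.2, h, matDeg_eq_bot_iff.2 rfl])

lemma coeff_C_mul_matrix (A : Matrix n n ℂ) (Q : MatP n) (k : ℕ) :
    (Matrix.of fun i j => ((A.map C * Q) i j).coeff k) =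
      A * Matrix.of fun i j => (Q i j).coeff k := by
  ext i j
  simp [Matrix.mul_apply, finsetSum_coeff]

lemma DegPres.isUnit_of_apply_eq_C_mul [DecidableEq n] {L : MatP n → MatP n} (hL : DegPres L)
    {Q R : MatP n} {B : Matrix n n ℂ} {k : ℕ}
    (hQ : IsUnit (Matrix.of fun i j => (Q i j).coeff k)) (h : L Q = B.map C * R) : IsUnit B := by
  rw [IsArtinianRing.isUnit_iff_isRightRegular, isRightRegular_iff_left_eq_zero_of_mul]
  intro M hM
  have hkill : L (M.map C * Q) = 0 := by
    rw [hL.1.map_C_mul, h, ← mul_assoc, ← Matrix.map_mul, hM, Matrix.map_zero _ (map_zero C),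
      zero_mul]
  have hcoeff := congrArg (fun P : MatP n => Matrix.of fun i j => (P i j).coeff k)
    (hL.eq_zero_of_apply_eq_zero hkill)
  simp only [coeff_C_mul_matrix, Matrix.zero_apply, coeff_zero] at hcoeff
  exact hQ.mul_left_eq_zero.1 hcoeff

lemma DegPres.exists_isUnit_apply_eq_C_mul [DecidableEq n] {L : MatP n → MatP n}
    (hL : DegPres L) {Q R : MatP n} {A Λ : Matrix n n ℂ} {k : ℕ} (hA : IsUnit A)
    (hQ : (Matrix.of fun i j => (Q i j).coeff k) = 1) (hΛ : L (A.map C * Q) = Λ.map C * R) :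
    ∃ B : Matrix n n ℂ, IsUnit B ∧ L Q = B.map C * R := by
  have hLQ : L Q = (A⁻¹ * Λ).map C * R := by
    rw [Matrix.map_mul, mul_assoc, ← hΛ, hL.1.map_C_mul, ← mul_assoc, ← Matrix.map_mul,
      Matrix.nonsing_inv_mul A ((Matrix.isUnit_iff_isUnit_det A).1 hA),
      Matrix.map_one _ (map_zero C) (map_one C), one_mul]
  exact ⟨_, hL.isUnit_of_apply_eq_C_mul (hQ ▸ isUnit_one) hLQ, hLQ⟩

end Degree

theorem stmt3_general {n : Type*} [Fintype n] [DecidableEq n]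
    (S : Set ℝ) (Wt : ℝ → Matrix n n ℂ)
    (P Pt : ℕ → MatP n) (hPt : MonicOPS S Wt Pt)
    (V Nd : MatP n → MatP n) (hV : DegPres V) (hN : DegPres Nd)
    (hD : InDW P (fun Q => Nd (V Q)))
    (hA : ∀ k, ∃ A : Matrix n n ℂ, IsUnit A ∧ V (P k) = A.map Polynomial.C * Pt k) :
    InDW Pt (fun Q => V (Nd Q)) ∧ IsDarbouxPair Pt P := by
  have hB : ∀ k, ∃ B : Matrix n n ℂ, IsUnit B ∧ Nd (Pt k) = B.map C * P k := fun k => by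
    obtain ⟨A, hAu, hAk⟩ := hA k
    obtain ⟨Λ, hΛ⟩ := hD.2 k
    exact hN.exists_isUnit_apply_eq_C_mul hAu (hPt.2.1 k) (by rw [← hAk]; exact hΛ)
  have hNV : InDW Pt (fun Q => V (Nd Q)) := by
    refine ⟨hN.1.comp hV.1, fun k => ?_⟩
    obtain ⟨B, -, hBk⟩ := hB k
    obtain ⟨A, -, hAk⟩ := hA k
    exact ⟨B * A, show V (Nd (Pt k)) = _ by
      rw [hBk, hV.1.map_C_mul, hAk, ← mul_assoc, ← Matrix.map_mul]⟩
  exact ⟨hNV, Nd, V, hN, hV, hNV, hB⟩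

/-- If `W̃` is a Darboux transformation of `W` via `D = V N ∈ D(W)`, then
`D̃ = N V ∈ D(W̃)` and `W` is a Darboux transformation of `W̃`. -/
theorem stmt3 {n : Type*} [Fintype n] [DecidableEq n]
    (S : Set ℝ) (W Wt : ℝ → Matrix n n ℂ)
    (hW : IsWeight S W) (hWt : IsWeight S Wt)
    (P Pt : ℕ → MatP n) (hP : MonicOPS S W P) (hPt : MonicOPS S Wt Pt)
    (V Nd : MatP n → MatP n) (hV : DegPres V) (hN : DegPres Nd)
    (hD : InDW P (fun Q => Nd (V Q)))
    (hA : ∀ k, ∃ A : Matrix n n ℂ, IsUnit A ∧ V (P k) = A.map Polynomial.C * Pt k) :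
    InDW Pt (fun Q => V (Nd Q)) ∧ IsDarbouxPair Pt P :=
  stmt3_general S Wt P Pt hPt V Nd hV hN hD hA
end

section
/- If W̃ is a Darboux transformation of W with factoring operators V and N, then the block operator (0 V; N 0) belongs to the algebra D(W ⊕ W̃). -/
open Polynomial Matrix MeasureTheory
open scoped ComplexOrder

/-- The off-diagonal block operator `(0 V; N 0)` built from the coefficients of `V` and `N`. -/
noncomputable def offBlocks {n : Type*} [Fintype n] [DecidableEq n]
    (F G : ℕ →₀ MatP n) : ℕ →₀ MatP (n ⊕ n) :=
  F.mapRange (fun A => Matrix.fromBlocks 0 A 0 0) (by simp) +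
  G.mapRange (fun A => Matrix.fromBlocks 0 0 A 0) (by simp)

/-
The block operator `D = (0 V; N 0)` acts on `diag(P, Q)` by `diag(P, Q) · D = (0, P · V; Q · N, 0)`.
On `diag(P_k, P̃_k)` the upper block is `A_k P̃_k`. For the lower block, right-acting operators
commute with left multiplication by constant matrices, so `A_k (P̃_k · N) = P_k · V N = Λ_k P_k`
and hence `P̃_k · N = A_k⁻¹ Λ_k P_k`. Together,
`diag(P_k, P̃_k) · D = (0, A_k; A_k⁻¹ Λ_k, 0) diag(P_k, P̃_k)`.
-/

theorem Matrix.fromBlocks_sum {ι l m n o α : Type*} [AddCommMonoid α] (s : Finset ι)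
    (A : ι → Matrix n l α) (B : ι → Matrix n m α) (C : ι → Matrix o l α)
    (D : ι → Matrix o m α) :
    ∑ i ∈ s, fromBlocks (A i) (B i) (C i) (D i) =
      fromBlocks (∑ i ∈ s, A i) (∑ i ∈ s, B i) (∑ i ∈ s, C i) (∑ i ∈ s, D i) := by
  classical
  induction s using Finset.induction with
  | empty => simp [fromBlocks_zero]
  | insert _ _ h ih => simp [Finset.sum_insert h, ih, fromBlocks_add]

section ActOp
variable {n : Type*}

lemma derivIter_fromBlocks (j : ℕ) (A B C D : MatP n) :
    derivIter j (fromBlocks A B C D) =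
      fromBlocks (derivIter j A) (derivIter j B) (derivIter j C) (derivIter j D) :=
  fromBlocks_map A B C D _

variable [Fintype n]

variable [DecidableEq n]

lemma actOp_offBlocks_fromBlocks (F G : ℕ →₀ MatP n) (P Q : MatP n) :
    actOp (offBlocks F G) (fromBlocks P 0 0 Q) = fromBlocks 0 (actOp F P) (actOp G Q) 0 := by
  have hzero : ∀ j, derivIter j (0 : MatP n) = 0 := fun j => by
    ext; simp [derivIter]
  unfold actOp offBlocks
  rw [Finsupp.sum_add_index' (fun _ => by simp) (fun _ _ _ => mul_add _ _ _),
    Finsupp.sum_mapRange_index (fun _ => by simp),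
    Finsupp.sum_mapRange_index (fun _ => by simp)]
  simp only [Finsupp.sum, derivIter_fromBlocks, hzero, fromBlocks_multiply, zero_mul, mul_zero,
    add_zero, zero_add, Matrix.fromBlocks_sum, Finset.sum_const_zero, fromBlocks_add]

lemma actOp_eq_of_actOp_C_mul_eq {G : ℕ →₀ MatP n} {A Λ : Matrix n n ℂ} (hA : IsUnit A)
    {Q R : MatP n} (h : actOp G (A.map C * Q) = Λ.map C * R) :
    actOp G Q = (A⁻¹ * Λ).map C * R := by
  have hAinv : A⁻¹ * A = 1 := nonsing_inv_mul A ((isUnit_iff_isUnit_det A).mp hA)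
  rw [actOp_C_mul] at h
  calc actOp G Q = (A⁻¹ * A).map C * actOp G Q := by simp [hAinv]
    _ = (A⁻¹ * Λ).map C * R := by
      rw [Matrix.map_mul, mul_assoc, h, ← mul_assoc, ← Matrix.map_mul]

end ActOp

theorem stmt4_general {n : Type*} [Fintype n] [DecidableEq n]
    (P Pt : ℕ → MatP n)
    (V Nd : MatP n → MatP n)
    (F G : ℕ →₀ MatP n) (hVF : ∀ Q, V Q = actOp F Q) (hNG : ∀ Q, Nd Q = actOp G Q)
    (hD : InDW P (fun Q => Nd (V Q)))
    (hA : ∀ k, ∃ A : Matrix n n ℂ, IsUnit A ∧ V (P k) = A.map Polynomial.C * Pt k) :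
    InDW (fun k => Matrix.fromBlocks (P k) 0 0 (Pt k)) (actOp (offBlocks F G)) := by
  refine ⟨⟨offBlocks F G, fun _ => rfl⟩, fun k => ?_⟩
  obtain ⟨A, hAunit, hVP⟩ := hA k
  obtain ⟨Λ, hΛ⟩ := hD.2 k
  have hNPt : actOp G (Pt k) = (A⁻¹ * Λ).map C * P k := by
    refine actOp_eq_of_actOp_C_mul_eq hAunit ?_
    rw [← hNG, ← hVP]
    exact hΛ
  refine ⟨fromBlocks 0 A (A⁻¹ * Λ) 0, ?_⟩
  rw [actOp_offBlocks_fromBlocks, ← hVF, hVP, hNPt, fromBlocks_map, fromBlocks_multiply]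
  simp

/-- If `W̃` is a Darboux transformation of `W` with factoring operators
`V` (with coefficients `F`) and `N` (with coefficients `G`), then the block operator
`(0 V; N 0)` belongs to `D(W ⊕ W̃)`, i.e. it has the monic orthogonal polynomials
`diag(P_k, P̃_k)` of `W ⊕ W̃` as eigenfunctions. -/
theorem stmt4 {n : Type*} [Fintype n] [DecidableEq n]
    (S : Set ℝ) (W Wt : ℝ → Matrix n n ℂ)
    (hW : IsWeight S W) (hWt : IsWeight S Wt)
    (P Pt : ℕ → MatP n) (hP : MonicOPS S W P) (hPt : MonicOPS S Wt Pt)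
    (V Nd : MatP n → MatP n) (hV : DegPres V) (hN : DegPres Nd)
    (F G : ℕ →₀ MatP n) (hVF : ∀ Q, V Q = actOp F Q) (hNG : ∀ Q, Nd Q = actOp G Q)
    (hD : InDW P (fun Q => Nd (V Q)))
    (hA : ∀ k, ∃ A : Matrix n n ℂ, IsUnit A ∧ V (P k) = A.map Polynomial.C * Pt k) :
    InDW (fun k => Matrix.fromBlocks (P k) 0 0 (Pt k)) (actOp (offBlocks F G)) :=
  stmt4_general P Pt V Nd F G hVF hNG hD hA
end

section
/- If W̃₁ is a Darboux transformation of W₁ and W̃₂ is a Darboux transformation of W₂, then W̃₁ ⊕ W̃₂ is a Darboux transformation of W₁ ⊕ W₂. -/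
open Polynomial Matrix MeasureTheory
open scoped ComplexOrder

/-!
A differential operator `∑ ∂^j F_j` acts on matrix polynomials by right multiplication, hence row
by row, so it acts just as well on rectangular matrices, and identities and degree equalities
valid on square matrices carry over to rectangular ones. The block-diagonal operator with
coefficients `F₁ ⊕ F₂` acts blockwise on `fromBlocks A B C D`, so degree preservation,
factorizations `D = V N`, eigenvalue equations `P_k · D = Λ_k P_k` and intertwinings
`P_k · V = A_k P̃_k` of the two summands assemble to those of the direct sum.
-/

section DiffAct
variable {m m' n : Type*} [Fintype n]

noncomputable def diffAct (F : ℕ →₀ MatP n) (P : Matrix m n ℂ[X]) : Matrix m n ℂ[X] :=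
  F.sum fun j Fj => P.map (derivative^[j]) * Fj

theorem actOp_eq_diffAct (F : ℕ →₀ MatP n) (P : MatP n) : actOp F P = diffAct F P := rfl

theorem diffAct_submatrix_left (F : ℕ →₀ MatP n) (P : Matrix m n ℂ[X]) (f : m' → m) :
    diffAct F (P.submatrix f id) = (diffAct F P).submatrix f id := by
  ext i j
  simp [diffAct, Finsupp.sum, Matrix.sum_apply, Matrix.mul_apply]

theorem diffAct_zero (F : ℕ →₀ MatP n) : diffAct F (0 : Matrix m n ℂ[X]) = 0 := by
  ext i j
  simp [diffAct, Finsupp.sum, Matrix.sum_apply, Function.iterate_fixed (map_zero derivative)]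

-- Entry `(i, j)` of `P` is entry `(j, j)` of the square matrix whose rows all equal row `i` of `P`.
theorem diffAct_comp_eq_of_square {F G D : ℕ →₀ MatP n}
    (h : ∀ P : MatP n, actOp G (actOp F P) = actOp D P) (P : Matrix m n ℂ[X]) :
    diffAct G (diffAct F P) = diffAct D P := by
  funext i j
  simpa [actOp_eq_diffAct, diffAct_submatrix_left] using
    congrFun₂ (h (P.submatrix (fun _ => i) id)) j j

end DiffAct

section EntryDeg
variable {m n : Type*} [Fintype m] [Fintype n]

noncomputable def entryDeg (P : Matrix m n ℂ[X]) : WithBot ℕ :=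
  Finset.univ.sup fun ij : m × n => (P ij.1 ij.2).degree

omit [Fintype m] in
theorem matDeg_eq_entryDeg (P : MatP n) : matDeg P = entryDeg P := rfl

theorem entryDeg_eq_sup_matDeg_rows (P : Matrix m n ℂ[X]) :
    entryDeg P = Finset.univ.sup fun i => matDeg (P.submatrix (fun _ : n => i) id) := by
  apply le_antisymm
  · exact Finset.sup_le fun ij _ => Finset.le_sup_of_le (Finset.mem_univ ij.1)
      (Finset.le_sup (f := fun kj : n × n => (P ij.1 kj.2).degree) (Finset.mem_univ (ij.2, ij.2)))
  · exact Finset.sup_le fun i _ => Finset.sup_le fun kj _ =>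
      Finset.le_sup (f := fun ij : m × n => (P ij.1 ij.2).degree) (Finset.mem_univ (i, kj.2))

theorem entryDeg_diffAct_of_square {F : ℕ →₀ MatP n}
    (h : ∀ P : MatP n, matDeg (actOp F P) = matDeg P) (P : Matrix m n ℂ[X]) :
    entryDeg (diffAct F P) = entryDeg P := by
  simp only [entryDeg_eq_sup_matDeg_rows, ← diffAct_submatrix_left, ← actOp_eq_diffAct, h]

theorem entryDeg_fromBlocks {m₁ m₂ n₁ n₂ : Type*} [Fintype m₁] [Fintype m₂] [Fintype n₁]
    [Fintype n₂] (A : Matrix m₁ n₁ ℂ[X]) (B : Matrix m₁ n₂ ℂ[X])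
    (C : Matrix m₂ n₁ ℂ[X]) (D : Matrix m₂ n₂ ℂ[X]) :
    entryDeg (Matrix.fromBlocks A B C D) =
      entryDeg A ⊔ entryDeg B ⊔ (entryDeg C ⊔ entryDeg D) := by
  simp only [entryDeg, ← Finset.univ_product_univ, Finset.sup_product_left,
    ← Finset.univ_disjSum_univ, Finset.sup_disjSum, Matrix.fromBlocks_apply₁₁,
    Matrix.fromBlocks_apply₁₂, Matrix.fromBlocks_apply₂₁, Matrix.fromBlocks_apply₂₂]
  exact congrArg₂ (· ⊔ ·) Finset.sup_sup Finset.sup_sup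

end EntryDeg

section BlockDiag
variable {n₁ n₂ : Type*} [Fintype n₁] [Fintype n₂]

noncomputable def blockDiagCoeffs (F₁ : ℕ →₀ MatP n₁) (F₂ : ℕ →₀ MatP n₂) :
    ℕ →₀ MatP (n₁ ⊕ n₂) :=
  Finsupp.zipWith (fun A B => Matrix.fromBlocks A 0 0 B) Matrix.fromBlocks_zero F₁ F₂

theorem diffAct_blockDiagCoeffs {m₁ m₂ : Type*} (F₁ : ℕ →₀ MatP n₁) (F₂ : ℕ →₀ MatP n₂)
    (A : Matrix m₁ n₁ ℂ[X]) (B : Matrix m₁ n₂ ℂ[X]) (C : Matrix m₂ n₁ ℂ[X])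
    (D : Matrix m₂ n₂ ℂ[X]) :
    diffAct (blockDiagCoeffs F₁ F₂) (Matrix.fromBlocks A B C D) =
      Matrix.fromBlocks (diffAct F₁ A) (diffAct F₂ B) (diffAct F₁ C) (diffAct F₂ D) := by
  have hsub : (blockDiagCoeffs F₁ F₂).support ⊆ F₁.support ∪ F₂.support :=
    Finsupp.support_zipWith
  have hsub₁ : F₁.support ⊆ F₁.support ∪ F₂.support := Finset.subset_union_left
  have hsub₂ : F₂.support ⊆ F₁.support ∪ F₂.support := Finset.subset_union_right
  unfold diffAct
  rw [Finsupp.sum_of_support_subset _ hsub _ fun _ _ => Matrix.mul_zero _,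
    Finsupp.sum_of_support_subset _ hsub₁ _ fun _ _ => Matrix.mul_zero _,
    Finsupp.sum_of_support_subset _ hsub₁ _ fun _ _ => Matrix.mul_zero _,
    Finsupp.sum_of_support_subset _ hsub₂ _ fun _ _ => Matrix.mul_zero _,
    Finsupp.sum_of_support_subset _ hsub₂ _ fun _ _ => Matrix.mul_zero _]
  funext i j
  rcases i with i | i <;> rcases j with j | j <;>
    simp [blockDiagCoeffs, Matrix.sum_apply, Matrix.fromBlocks_map, Matrix.fromBlocks_multiply]

theorem actOp_blockDiagCoeffs_fromBlocks_zero (F₁ : ℕ →₀ MatP n₁) (F₂ : ℕ →₀ MatP n₂)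
    (A : MatP n₁) (D : MatP n₂) :
    actOp (blockDiagCoeffs F₁ F₂) (Matrix.fromBlocks A 0 0 D) =
      Matrix.fromBlocks (actOp F₁ A) 0 0 (actOp F₂ D) := by
  rw [actOp_eq_diffAct, diffAct_blockDiagCoeffs, diffAct_zero, diffAct_zero]
  rfl

theorem DegPres.actOp_blockDiagCoeffs {F₁ : ℕ →₀ MatP n₁} {F₂ : ℕ →₀ MatP n₂}
    (h₁ : DegPres (actOp F₁)) (h₂ : DegPres (actOp F₂)) :
    DegPres (actOp (blockDiagCoeffs F₁ F₂)) := by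
  refine ⟨⟨_, fun _ => rfl⟩, fun P => ?_⟩
  obtain ⟨A, B, C, D, rfl⟩ : ∃ A B C D, P = Matrix.fromBlocks A B C D :=
    ⟨_, _, _, _, (Matrix.fromBlocks_toBlocks P).symm⟩
  rw [matDeg_eq_entryDeg, matDeg_eq_entryDeg, actOp_eq_diffAct, diffAct_blockDiagCoeffs,
    entryDeg_fromBlocks, entryDeg_fromBlocks, entryDeg_diffAct_of_square h₁.2,
    entryDeg_diffAct_of_square h₂.2, entryDeg_diffAct_of_square h₁.2,
    entryDeg_diffAct_of_square h₂.2]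

theorem actOp_blockDiagCoeffs_comp {F₁ G₁ D₁ : ℕ →₀ MatP n₁} {F₂ G₂ D₂ : ℕ →₀ MatP n₂}
    (h₁ : ∀ P, actOp G₁ (actOp F₁ P) = actOp D₁ P)
    (h₂ : ∀ P, actOp G₂ (actOp F₂ P) = actOp D₂ P) (P : MatP (n₁ ⊕ n₂)) :
    actOp (blockDiagCoeffs G₁ G₂) (actOp (blockDiagCoeffs F₁ F₂) P) =
      actOp (blockDiagCoeffs D₁ D₂) P := by
  rw [← Matrix.fromBlocks_toBlocks P]
  simp only [actOp_eq_diffAct, diffAct_blockDiagCoeffs, diffAct_comp_eq_of_square h₁,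
    diffAct_comp_eq_of_square h₂]

theorem InDW.actOp_blockDiagCoeffs {P₁ : ℕ → MatP n₁} {P₂ : ℕ → MatP n₂}
    {F₁ G₁ : ℕ →₀ MatP n₁} {F₂ G₂ : ℕ →₀ MatP n₂}
    (h₁ : InDW P₁ fun Q => actOp G₁ (actOp F₁ Q)) (h₂ : InDW P₂ fun Q => actOp G₂ (actOp F₂ Q)) :
    InDW (fun k => Matrix.fromBlocks (P₁ k) 0 0 (P₂ k))
      fun Q => actOp (blockDiagCoeffs G₁ G₂) (actOp (blockDiagCoeffs F₁ F₂) Q) := by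
  obtain ⟨⟨D₁, hD₁⟩, hΛ₁⟩ := h₁
  obtain ⟨⟨D₂, hD₂⟩, hΛ₂⟩ := h₂
  refine ⟨⟨blockDiagCoeffs D₁ D₂, actOp_blockDiagCoeffs_comp hD₁ hD₂⟩, fun k => ?_⟩
  obtain ⟨Λ₁, hΛ₁k⟩ := hΛ₁ k
  obtain ⟨Λ₂, hΛ₂k⟩ := hΛ₂ k
  refine ⟨Matrix.fromBlocks Λ₁ 0 0 Λ₂, ?_⟩
  simp only [actOp_blockDiagCoeffs_fromBlocks_zero, hΛ₁k, hΛ₂k]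
  simp [Matrix.fromBlocks_map, Matrix.fromBlocks_multiply]

end BlockDiag

theorem stmt7_general {n₁ n₂ : Type*} [Fintype n₁] [DecidableEq n₁] [Fintype n₂] [DecidableEq n₂]
    (P₁ Pt₁ : ℕ → MatP n₁) (P₂ Pt₂ : ℕ → MatP n₂)
    (h₁ : IsDarbouxPair P₁ Pt₁) (h₂ : IsDarbouxPair P₂ Pt₂) :
    IsDarbouxPair (fun k => Matrix.fromBlocks (P₁ k) 0 0 (P₂ k))
      (fun k => Matrix.fromBlocks (Pt₁ k) 0 0 (Pt₂ k)) := by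
  obtain ⟨V₁, N₁, hV₁, hN₁, hD₁, hA₁⟩ := h₁
  obtain ⟨V₂, N₂, hV₂, hN₂, hD₂, hA₂⟩ := h₂
  obtain ⟨⟨F₁, rfl⟩, ⟨G₁, rfl⟩⟩ : (∃ F, V₁ = actOp F) ∧ ∃ G, N₁ = actOp G :=
    ⟨hV₁.1.imp fun _ => funext, hN₁.1.imp fun _ => funext⟩
  obtain ⟨⟨F₂, rfl⟩, ⟨G₂, rfl⟩⟩ : (∃ F, V₂ = actOp F) ∧ ∃ G, N₂ = actOp G :=
    ⟨hV₂.1.imp fun _ => funext, hN₂.1.imp fun _ => funext⟩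
  refine ⟨_, _, hV₁.actOp_blockDiagCoeffs hV₂, hN₁.actOp_blockDiagCoeffs hN₂,
    hD₁.actOp_blockDiagCoeffs hD₂, fun k => ?_⟩
  obtain ⟨A₁, hA₁u, hA₁k⟩ := hA₁ k
  obtain ⟨A₂, hA₂u, hA₂k⟩ := hA₂ k
  refine ⟨Matrix.fromBlocks A₁ 0 0 A₂, by simp [hA₁u, hA₂u], ?_⟩
  rw [actOp_blockDiagCoeffs_fromBlocks_zero, hA₁k, hA₂k]
  simp [Matrix.fromBlocks_map, Matrix.fromBlocks_multiply]

/-- If `W̃₁` is a Darboux transformation of `W₁` and `W̃₂` of `W₂`, then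
`W̃₁ ⊕ W̃₂` is a Darboux transformation of `W₁ ⊕ W₂` (whose monic orthogonal polynomials
are the block-diagonal sums of those of the summands). -/
theorem stmt7 {n₁ n₂ : Type*} [Fintype n₁] [DecidableEq n₁] [Fintype n₂] [DecidableEq n₂]
    (S : Set ℝ)
    (W₁ Wt₁ : ℝ → Matrix n₁ n₁ ℂ) (W₂ Wt₂ : ℝ → Matrix n₂ n₂ ℂ)
    (hW₁ : IsWeight S W₁) (hWt₁ : IsWeight S Wt₁)
    (hW₂ : IsWeight S W₂) (hWt₂ : IsWeight S Wt₂)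
    (P₁ Pt₁ : ℕ → MatP n₁) (P₂ Pt₂ : ℕ → MatP n₂)
    (hP₁ : MonicOPS S W₁ P₁) (hPt₁ : MonicOPS S Wt₁ Pt₁)
    (hP₂ : MonicOPS S W₂ P₂) (hPt₂ : MonicOPS S Wt₂ Pt₂)
    (h₁ : IsDarbouxPair P₁ Pt₁) (h₂ : IsDarbouxPair P₂ Pt₂) :
    IsDarbouxPair (fun k => Matrix.fromBlocks (P₁ k) 0 0 (P₂ k))
      (fun k => Matrix.fromBlocks (Pt₁ k) 0 0 (Pt₂ k)) :=
  stmt7_general P₁ Pt₁ P₂ Pt₂ h₁ h₂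
end

section
/- For Jacobi weights w_{α,β}(x) = (1−x)^α(1+x)^β with α, β > −1 and m ∈ ℕ, the weight w_{α+m,β} is not a Darboux transformation of w_{α,β}. -/
open Polynomial Matrix MeasureTheory

section ScalarFramework

/-- Right action of the scalar differential operator `∑_j ∂^j f_j` on a polynomial. -/
noncomputable def sAct (F : ℕ →₀ Polynomial ℂ) (p : Polynomial ℂ) : Polynomial ℂ :=
  F.sum fun j c => Polynomial.derivative^[j] p * c

/-- A map on polynomials is a (scalar) differential operator with polynomial coefficients. -/
def IsSDiffOp (L : Polynomial ℂ → Polynomial ℂ) : Prop :=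
  ∃ F : ℕ →₀ Polynomial ℂ, ∀ p, L p = sAct F p

/-- A degree-preserving scalar differential operator. -/
def SDegPres (L : Polynomial ℂ → Polynomial ℂ) : Prop :=
  IsSDiffOp L ∧ ∀ p : Polynomial ℂ, (L p).degree = p.degree

/-- `w` is a scalar weight on `S`: positive on `S` with finite moments. -/
def IsScalarWeight (S : Set ℝ) (w : ℝ → ℝ) : Prop :=
  MeasurableSet S ∧ volume S ≠ 0 ∧ (∀ x ∈ S, 0 < w x) ∧
  ∀ k : ℕ, IntegrableOn (fun x => w x * |x| ^ k) S

/-- The inner product `⟨p,q⟩ = ∫_S p(x) w(x) conj (q(x)) dx`. -/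
noncomputable def sInner (S : Set ℝ) (w : ℝ → ℝ) (p q : Polynomial ℂ) : ℂ :=
  ∫ x in S, p.eval (x : ℂ) * (w x : ℂ) * (starRingEnd ℂ) (q.eval (x : ℂ))

/-- `p` is the sequence of monic orthogonal polynomials for the scalar weight `w` on `S`. -/
def SMonicOPS (S : Set ℝ) (w : ℝ → ℝ) (p : ℕ → Polynomial ℂ) : Prop :=
  (∀ k, (p k).Monic ∧ (p k).natDegree = k) ∧
  ∀ k l, k ≠ l → sInner S w (p k) (p l) = 0

/-- `L ∈ D(w₁, w₂)`: a scalar differential operator with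
`p_k^{w₁} · L = λ_k q_k^{w₂}` for all `k`. -/
def SInMod (p q : ℕ → Polynomial ℂ) (L : Polynomial ℂ → Polynomial ℂ) : Prop :=
  IsSDiffOp L ∧ ∀ k, ∃ lam : ℂ, L (p k) = Polynomial.C lam * q k

/-- `L ∈ D(w)`: the monic OPS `p` of `w` are eigenfunctions of `L`. -/
def SInDW (p : ℕ → Polynomial ℂ) (L : Polynomial ℂ → Polynomial ℂ) : Prop :=
  SInMod p p L

/-- The weight of `q` is a Darboux transformation of the weight of `p` (where `p`, `q`
are the respective monic OPS): there is `D = V N ∈ D(w_p)` with `V`, `N`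
degree-preserving and `p_k · V = c_k q_k`, `c_k ≠ 0`. -/
def SDarboux (p q : ℕ → Polynomial ℂ) : Prop :=
  ∃ V Nd : Polynomial ℂ → Polynomial ℂ, SDegPres V ∧ SDegPres Nd ∧
    SInDW p (fun r => Nd (V r)) ∧
    ∀ k, ∃ c : ℂ, c ≠ 0 ∧ V (p k) = Polynomial.C c * q k

/-- The shifted Hermite weight `e^{-x² + 2bx}` on `ℝ`. -/
noncomputable def hermiteW (b : ℝ) : ℝ → ℝ := fun x => Real.exp (-x ^ 2 + 2 * b * x)

/-- The Laguerre weight `e^{-x} x^α` on `(0, ∞)`. -/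
noncomputable def laguerreW (α : ℝ) : ℝ → ℝ := fun x => Real.exp (-x) * x ^ α

/-- The Jacobi weight `(1-x)^α (1+x)^β` on `(-1, 1)`. -/
noncomputable def jacobiW (α β : ℝ) : ℝ → ℝ := fun x => (1 - x) ^ α * (1 + x) ^ β

end ScalarFramework

/-!
Orthogonality and the symmetry of the Jacobi operator `δ_{α,β}` for `w_{α,β}` (integration by
parts) make `p_k` an eigenfunction of `δ_{α,β}`. Hence the coefficient of `(x - 1)ⁱ` in `p_k`
is `p_k(1) A_i(k)` for polynomials `A_i` (the terms of a `₂F₁`), all invariant under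
`ν ↦ -(α + β + 1) - ν`; likewise `q_k` has coefficients `q_k(1) B_i(k)` for the parameter
`α + m`. A differential operator `V` of order `n` is banded in powers of `x - 1`, so
`p_k V = c_k q_k` gives polynomial identities `E_i = E_0 B_i` with `E_i` a combination of
`A_0, …, A_{i+n}`. Thus every `B_i` would inherit the symmetry `ν ↦ -(α + β + 1) - ν`; but
`B_1(ν) ∝ ν (ν + α + m + β + 1)` is only symmetric under `ν ↦ -(α + m + β + 1) - ν`.
-/

open Set ComplexConjugate

section Weight

variable {S : Set ℝ} {w : ℝ → ℝ}

lemma conj_eval_ofReal (f : ℂ[X]) (x : ℝ) :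
    conj (f.eval (x : ℂ)) = (f.map (starRingEnd ℂ)).eval (x : ℂ) := by
  rw [← eval_map_apply, Complex.conj_ofReal]

lemma sInner_conj_symm (S : Set ℝ) (w : ℝ → ℝ) (f g : ℂ[X]) :
    sInner S w g f = conj (sInner S w f g) := by
  unfold sInner
  rw [← integral_conj]
  congr 1 with x
  simp only [map_mul, Complex.conj_conj, Complex.conj_ofReal]
  ring

namespace IsScalarWeight

lemma integrableOn_eval_mul (hw : IsScalarWeight S w) (f : ℂ[X]) :
    IntegrableOn (fun x : ℝ => f.eval (x : ℂ) * (w x : ℂ)) S := by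
  have hmeas : AEStronglyMeasurable w (volume.restrict S) := by
    simpa using (hw.2.2.2 0).aestronglyMeasurable
  have hmoment (i : ℕ) : IntegrableOn (fun x : ℝ => ((x ^ i * w x : ℝ) : ℂ)) S := by
    refine Integrable.ofReal (Integrable.mono' (hw.2.2.2 i)
      ((continuous_pow i).aestronglyMeasurable.mul hmeas) ?_)
    filter_upwards [ae_restrict_mem hw.1] with x hx
    change ‖x ^ i * w x‖ ≤ _
    rw [norm_mul, norm_pow, Real.norm_eq_abs, Real.norm_of_nonneg (hw.2.2.1 x hx).le, mul_comm]
  have hsum := integrable_finsetSum (Finset.range (f.natDegree + 1))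
    fun i _ => (hmoment i).const_mul (f.coeff i)
  refine hsum.congr (ae_of_all _ fun x => ?_)
  simp only [eval_eq_sum_range, Finset.sum_mul]
  push_cast
  exact Finset.sum_congr rfl fun i _ => by ring

lemma integrableOn_sInner (hw : IsScalarWeight S w) (f g : ℂ[X]) :
    IntegrableOn (fun x : ℝ => f.eval (x : ℂ) * (w x : ℂ) * conj (g.eval (x : ℂ))) S :=
  (hw.integrableOn_eval_mul (f * g.map (starRingEnd ℂ))).congr (ae_of_all _ fun x => by
    simp only [eval_mul, conj_eval_ofReal]; ring)

noncomputable def innerLeft (hw : IsScalarWeight S w) (g : ℂ[X]) : ℂ[X] →ₗ[ℂ] ℂ where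
  toFun f := sInner S w f g
  map_add' f f' := by
    unfold sInner
    rw [← integral_add (hw.integrableOn_sInner f g) (hw.integrableOn_sInner f' g)]
    congr 1 with x
    simp only [eval_add]; ring
  map_smul' c f := by
    unfold sInner
    rw [RingHom.id_apply, smul_eq_mul, ← integral_const_mul]
    congr 1 with x
    simp only [eval_smul, smul_eq_mul]; ring

lemma innerLeft_apply (hw : IsScalarWeight S w) (f g : ℂ[X]) :
    hw.innerLeft g f = sInner S w f g := rfl

lemma sInner_self_ne_zero (hw : IsScalarWeight S w) {f : ℂ[X]} (hf : f ≠ 0) :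
    sInner S w f f ≠ 0 := by
  have hreal :
      sInner S w f f = ((∫ x in S, w x * Complex.normSq (f.eval (x : ℂ)) : ℝ) : ℂ) := by
    rw [← integral_complex_ofReal]
    unfold sInner
    congr 1 with x
    rw [mul_right_comm, Complex.mul_conj]
    push_cast; ring
  have hint : IntegrableOn (fun x : ℝ => w x * Complex.normSq (f.eval (x : ℂ))) S :=
    (hw.integrableOn_sInner f f).re.congr (ae_of_all _ fun x => by
      simp only [mul_right_comm _ (w x : ℂ), Complex.mul_conj]
      simp [mul_comm])
  have hnonneg :
      0 ≤ᵐ[volume.restrict S] fun x : ℝ => w x * Complex.normSq (f.eval (x : ℂ)) := by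
    filter_upwards [ae_restrict_mem hw.1] with x hx
    exact mul_nonneg (hw.2.2.1 x hx).le (Complex.normSq_nonneg _)
  have hroots : {x : ℝ | f.eval (x : ℂ) = 0}.Finite :=
    (Polynomial.finite_setOfPred_isRoot hf).preimage Complex.ofReal_injective.injOn
  rw [hreal, Complex.ofReal_ne_zero]
  refine ((setIntegral_pos_iff_support_of_nonneg_ae hnonneg hint).mpr ?_).ne'
  calc (0 : ENNReal) < volume S := pos_iff_ne_zero.mpr hw.2.1
    _ = volume (S \ {x : ℝ | f.eval (x : ℂ) = 0}) :=
      (measure_sdiff_null (hroots.measure_zero _)).symm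
    _ ≤ _ := measure_mono fun x ⟨hxS, hx⟩ =>
      show x ∈ Function.support _ ∩ S from
        ⟨mul_ne_zero (hw.2.2.1 x hxS).ne' (Complex.normSq_pos.mpr hx).ne', hxS⟩

end IsScalarWeight

end Weight

namespace SMonicOPS

variable {S : Set ℝ} {w : ℝ → ℝ} {p : ℕ → ℂ[X]}

lemma sInner_eq_zero_of_degree_lt (hw : IsScalarWeight S w) (hp : SMonicOPS S w p) {k : ℕ}
    {f : ℂ[X]} (hf : f.degree < k) : sInner S w f (p k) = 0 := by
  let P : Polynomial.Sequence ℂ :=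
    ⟨p, fun i => by rw [degree_eq_natDegree (hp.1 i).1.ne_zero, (hp.1 i).2]⟩
  have hspan : degreeLT ℂ k ≤ LinearMap.ker (hw.innerLeft (p k)) := by
    rw [← P.span_degreeLT fun i _ => by simp [P, (hp.1 i).1.leadingCoeff], Submodule.span_le]
    rintro _ ⟨l, hl, rfl⟩
    exact hp.2 l k (ne_of_lt hl)
  exact hspan (mem_degreeLT.mpr hf)

lemma sInner_eq_zero_of_degree_lt' (hw : IsScalarWeight S w) (hp : SMonicOPS S w p) {k : ℕ}
    {f : ℂ[X]} (hf : f.degree < k) : sInner S w (p k) f = 0 := by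
  rw [sInner_conj_symm, hp.sInner_eq_zero_of_degree_lt hw hf, map_zero]

lemma apply_eq_C_mul_of_symm (hw : IsScalarWeight S w) (hp : SMonicOPS S w p)
    {L : ℂ[X] → ℂ[X]} (hL : ∀ f g, sInner S w (L f) g = sInner S w f (L g))
    (hLdeg : ∀ f, (L f).natDegree ≤ f.natDegree) (k : ℕ) :
    L (p k) = C ((L (p k)).coeff k) * p k := by
  set r := L (p k) - C ((L (p k)).coeff k) * p k
  have hr : r.degree < k := by
    rw [degree_lt_iff_coeff_zero]
    intro j hj
    have hLp : (L (p k)).natDegree ≤ k := (hLdeg _).trans (hp.1 k).2.le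
    rcases hj.lt_or_eq with hj | rfl
    · simp [r, coeff_eq_zero_of_natDegree_lt (hLp.trans_lt hj),
        coeff_eq_zero_of_natDegree_lt ((hp.1 k).2.trans_lt hj)]
    · have hlead : (p k).coeff k = 1 := by simpa [(hp.1 k).2] using (hp.1 k).1.coeff_natDegree
      simp [r, hlead]
  by_contra hne
  have hr0 : r ≠ 0 := sub_ne_zero.mpr hne
  have hLr : (L r).degree < k := by
    rw [← natDegree_lt_iff_degree_lt hr0] at hr
    exact (degree_le_natDegree.trans (WithBot.coe_le_coe.mpr (hLdeg r))).trans_lt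
      (WithBot.coe_lt_coe.mpr hr)
  refine hw.sInner_self_ne_zero hr0 ?_
  rw [← hw.innerLeft_apply, map_sub, ← smul_eq_C_mul, map_smul, hw.innerLeft_apply,
    hw.innerLeft_apply, hL, hp.sInner_eq_zero_of_degree_lt' hw hLr,
    hp.sInner_eq_zero_of_degree_lt' hw hr, smul_zero, sub_zero]

end SMonicOPS

section JacobiWeight

variable {a b : ℝ}

lemma jacobiW_pos {x : ℝ} (hx : x ∈ Ioo (-1 : ℝ) 1) : 0 < jacobiW a b x :=
  mul_pos (Real.rpow_pos_of_pos (by linarith [hx.2]) a)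
    (Real.rpow_pos_of_pos (by linarith [hx.1]) b)

lemma rpow_le_max_one_two_rpow {y : ℝ} (b : ℝ) (h1 : 1 ≤ y) (h2 : y ≤ 2) :
    y ^ b ≤ max 1 ((2 : ℝ) ^ b) := by
  rcases le_total 0 b with hb | hb
  · exact (Real.rpow_le_rpow (by linarith) h2 hb).trans (le_max_right _ _)
  · exact (Real.rpow_le_one_of_one_le_of_nonpos h1 hb).trans (le_max_left _ _)

lemma jacobiW_le {x : ℝ} (hx : x ∈ Ioo (-1 : ℝ) 1) :
    jacobiW a b x ≤
      max 1 ((2 : ℝ) ^ b) * (1 - x) ^ a + max 1 ((2 : ℝ) ^ a) * (1 + x) ^ b := by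
  obtain ⟨hx1, hx2⟩ := hx
  have h1 : 0 ≤ (1 - x) ^ a := Real.rpow_nonneg (by linarith) a
  have h2 : 0 ≤ (1 + x) ^ b := Real.rpow_nonneg (by linarith) b
  have hA : 0 ≤ max 1 ((2 : ℝ) ^ a) := le_max_of_le_left zero_le_one
  have hB : 0 ≤ max 1 ((2 : ℝ) ^ b) := le_max_of_le_left zero_le_one
  unfold jacobiW
  rcases le_total 0 x with hx | hx
  · have := rpow_le_max_one_two_rpow b (by linarith : 1 ≤ 1 + x) (by linarith)
    nlinarith [mul_le_mul_of_nonneg_left this h1, mul_nonneg hA h2]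
  · have := rpow_le_max_one_two_rpow a (by linarith : 1 ≤ 1 - x) (by linarith)
    nlinarith [mul_le_mul_of_nonneg_right this h2, mul_nonneg hB h1]

lemma integrableOn_jacobiW (ha : -1 < a) (hb : -1 < b) :
    IntegrableOn (jacobiW a b) (Ioo (-1) 1) := by
  have hint₁ : IntegrableOn (fun x : ℝ => (1 - x) ^ a) (Ioo (-1) 1) := by
    have := ((intervalIntegral.intervalIntegrable_rpow' ha (a := 0) (b := 2)).comp_sub_left 1).symm
    norm_num at this
    exact (intervalIntegrable_iff_integrableOn_Ioo_of_le (by norm_num)).mp this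
  have hint₂ : IntegrableOn (fun x : ℝ => (1 + x) ^ b) (Ioo (-1) 1) := by
    have := (intervalIntegral.intervalIntegrable_rpow' hb (a := 0) (b := 2)).comp_add_left 1
    norm_num at this
    exact (intervalIntegrable_iff_integrableOn_Ioo_of_le (by norm_num)).mp this
  refine Integrable.mono' ((hint₁.const_mul (max 1 ((2 : ℝ) ^ b))).add
    (hint₂.const_mul (max 1 ((2 : ℝ) ^ a))))
    (by unfold jacobiW; fun_prop) ?_
  filter_upwards [ae_restrict_mem measurableSet_Ioo] with x hx
  rw [Real.norm_of_nonneg (jacobiW_pos hx).le]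
  exact jacobiW_le hx

lemma isScalarWeight_jacobiW (ha : -1 < a) (hb : -1 < b) :
    IsScalarWeight (Ioo (-1) 1) (jacobiW a b) := by
  refine ⟨measurableSet_Ioo, by simp, fun x hx => jacobiW_pos hx, fun k => ?_⟩
  exact (((integrableOn_Icc_iff_integrableOn_Ioo).mpr (integrableOn_jacobiW ha hb)).mul_continuousOn
    (by fun_prop) isCompact_Icc).mono_set Ioo_subset_Icc_self

end JacobiWeight

lemma derivative_taylor {R : Type*} [CommSemiring R] (r : R) (f : R[X]) :
    derivative (taylor r f) = taylor r (derivative f) := by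
  rw [taylor_apply, taylor_apply, derivative_comp]
  simp

lemma coeff_taylor_of_natDegree_le {R : Type*} [CommRing R] (r : R) {f : R[X]} {n : ℕ}
    (hf : f.natDegree ≤ n) : (taylor r f).coeff n = f.coeff n := by
  rcases hf.lt_or_eq with hf | rfl
  · rw [coeff_eq_zero_of_natDegree_lt hf,
      coeff_eq_zero_of_natDegree_lt ((natDegree_taylor f r).trans_lt hf)]
  · rw [coeff_taylor_natDegree, leadingCoeff]

/-- The operator `δ_{a,b}` of the paper, which writes it acting on the right. -/
noncomputable def jacobiOp (a b : ℂ) (f : ℂ[X]) : ℂ[X] :=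
  (1 - X ^ 2) * derivative (derivative f) + (C (b - a) - C (a + b + 2) * X) * derivative f

section JacobiOp

variable (a b : ℂ)

lemma coeff_taylor_jacobiOp (f : ℂ[X]) (i : ℕ) :
    (taylor 1 (jacobiOp a b f)).coeff i =
      -2 * (i + 1) * (i + 1 + a) * (taylor 1 f).coeff (i + 1)
        - i * (i + a + b + 1) * (taylor 1 f).coeff i := by
  set T := taylor 1 f
  have hT : taylor 1 (jacobiOp a b f) =
      -(X * (X * derivative (derivative T))) - 2 * (X * derivative (derivative T))
        - C (2 * (a + 1)) * derivative T - C (a + b + 2) * (X * derivative T) := by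
    simp only [T, derivative_taylor, jacobiOp, taylor_mul, map_add, map_sub, taylor_one, taylor_C,
      taylor_X, taylor_pow]
    simp only [C_add, C_mul, C_1, C_ofNat]
    ring
  rw [hT]
  match i with
  | 0 =>
    simp only [coeff_sub, coeff_neg, mul_coeff_zero, coeff_C_zero, coeff_X_zero, coeff_derivative,
      coeff_ofNat_mul]
    push_cast; ring
  | 1 =>
    simp only [coeff_sub, coeff_neg, coeff_C_mul, coeff_X_mul, mul_coeff_zero, coeff_X_zero,
      coeff_derivative, coeff_ofNat_mul]
    push_cast; ring
  | n + 2 =>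
    simp only [coeff_sub, coeff_neg, coeff_C_mul, coeff_X_mul, coeff_derivative, coeff_ofNat_mul]
    push_cast; ring

lemma natDegree_jacobiOp_le (f : ℂ[X]) : (jacobiOp a b f).natDegree ≤ f.natDegree := by
  rw [← natDegree_taylor _ 1, natDegree_le_iff_coeff_eq_zero]
  intro i hi
  rw [coeff_taylor_jacobiOp, coeff_eq_zero_of_natDegree_lt (by rw [natDegree_taylor]; omega),
    coeff_eq_zero_of_natDegree_lt (by rw [natDegree_taylor]; omega)]
  ring

lemma coeff_jacobiOp_natDegree (f : ℂ[X]) :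
    (jacobiOp a b f).coeff f.natDegree =
      -(f.natDegree * (f.natDegree + a + b + 1)) * f.leadingCoeff := by
  rw [← coeff_taylor_of_natDegree_le 1 (natDegree_jacobiOp_le a b f), coeff_taylor_jacobiOp,
    coeff_eq_zero_of_natDegree_lt (by rw [natDegree_taylor]; omega), coeff_taylor_natDegree]
  ring

lemma jacobiOp_mul_sub_mul_jacobiOp (r t : ℂ[X]) :
    jacobiOp a b r * t - r * jacobiOp a b t =
      (1 - X ^ 2) * derivative (derivative r * t - r * derivative t)
        + (C (b - a) - C (a + b + 2) * X) * (derivative r * t - r * derivative t) := by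
  simp only [jacobiOp, derivative_sub, derivative_mul]
  ring

end JacobiOp

section JacobiSymm

variable {a b : ℝ}

/-- Pearson's equation `(σ w)' = τ w` for `σ = 1 - x²`, `τ = b - a - (a + b + 2) x`. -/
lemma hasDerivAt_jacobiW_succ {x : ℝ} (hx : x ∈ Ioo (-1 : ℝ) 1) :
    HasDerivAt (fun y => (1 - y) ^ (a + 1) * (1 + y) ^ (b + 1))
      ((b - a - (a + b + 2) * x) * jacobiW a b x) x := by
  obtain ⟨hx1, hx2⟩ := hx
  have h₁ := ((hasDerivAt_id' x).const_sub 1).rpow_const (p := a + 1) (Or.inl (by linarith))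
  have h₂ := ((hasDerivAt_id' x).const_add 1).rpow_const (p := b + 1) (Or.inl (by linarith))
  refine (h₁.mul h₂).congr_deriv ?_
  simp only [jacobiW, add_sub_cancel_right, Real.rpow_add_one (by linarith : 1 - x ≠ 0),
    Real.rpow_add_one (by linarith : 1 + x ≠ 0)]
  ring

lemma integral_pearson_mul_jacobiW (ha : -1 < a) (hb : -1 < b) (u : ℂ[X]) :
    ∫ x in Ioo (-1) 1, ((1 - X ^ 2) * derivative u
      + (C ((b : ℂ) - a) - C ((a : ℂ) + b + 2) * X) * u).eval (x : ℂ) * (jacobiW a b x : ℂ)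
      = 0 := by
  set v := (1 - X ^ 2) * derivative u + (C ((b : ℂ) - a) - C ((a : ℂ) + b + 2) * X) * u
  set g : ℝ → ℂ := fun y =>
    (((1 - y) ^ (a + 1) * (1 + y) ^ (b + 1) : ℝ) : ℂ) * u.eval (y : ℂ)
  have hcont : ContinuousOn g (Icc (-1) 1) := by
    have h₁ : ContinuousOn (fun y : ℝ => (1 - y) ^ (a + 1)) (Icc (-1) 1) :=
      (continuousOn_const.sub continuousOn_id).rpow_const fun _ _ => Or.inr (by linarith)
    have h₂ : ContinuousOn (fun y : ℝ => (1 + y) ^ (b + 1)) (Icc (-1) 1) :=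
      (continuousOn_const.add continuousOn_id).rpow_const fun _ _ => Or.inr (by linarith)
    exact (Complex.continuous_ofReal.comp_continuousOn (h₁.mul h₂)).mul
      (u.continuous.comp Complex.continuous_ofReal).continuousOn
  have hderiv : ∀ x ∈ Ioo (-1 : ℝ) 1,
      HasDerivAt g (v.eval (x : ℂ) * (jacobiW a b x : ℂ)) x := by
    intro x hx
    refine ((hasDerivAt_jacobiW_succ hx).ofReal_comp.mul
      (u.hasDerivAt (x : ℂ)).comp_ofReal).congr_deriv ?_
    have hσ : (1 - x) ^ (a + 1) * (1 + x) ^ (b + 1) = (1 - x ^ 2) * jacobiW a b x := by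
      rw [jacobiW, Real.rpow_add_one (by linarith [hx.2]), Real.rpow_add_one (by linarith [hx.1])]
      ring
    simp only [v, hσ, eval_add, eval_mul, eval_sub, eval_one, eval_pow, eval_X, eval_C]
    push_cast
    ring
  have hint := (isScalarWeight_jacobiW ha hb).integrableOn_eval_mul v
  have hFTC := intervalIntegral.integral_eq_sub_of_hasDerivAt_of_le (by norm_num) hcont hderiv
    ((intervalIntegrable_iff_integrableOn_Ioo_of_le (by norm_num)).mpr hint)
  rw [intervalIntegral.integral_of_le (by norm_num), integral_Ioc_eq_integral_Ioo] at hFTC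
  rw [hFTC]
  simp [g, Real.zero_rpow (by linarith : a + 1 ≠ 0), Real.zero_rpow (by linarith : b + 1 ≠ 0)]

lemma jacobiOp_map_conj (f : ℂ[X]) :
    jacobiOp a b (f.map (starRingEnd ℂ)) = (jacobiOp a b f).map (starRingEnd ℂ) := by
  simp [jacobiOp, derivative_map, Polynomial.map_sub, Complex.conj_ofReal, map_ofNat]

lemma sInner_jacobiOp_comm (ha : -1 < a) (hb : -1 < b) (f g : ℂ[X]) :
    sInner (Ioo (-1) 1) (jacobiW a b) (jacobiOp a b f) g
      = sInner (Ioo (-1) 1) (jacobiW a b) f (jacobiOp a b g) := by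
  have hw := isScalarWeight_jacobiW ha hb
  set g' := g.map (starRingEnd ℂ)
  rw [← sub_eq_zero, sInner, sInner, ← integral_sub (hw.integrableOn_sInner _ _)
    (hw.integrableOn_sInner _ _), ← integral_pearson_mul_jacobiW ha hb
    (derivative f * g' - f * derivative g')]
  congr 1 with x
  rw [← jacobiOp_mul_sub_mul_jacobiOp, conj_eval_ofReal, conj_eval_ofReal, ← jacobiOp_map_conj]
  simp only [eval_sub, eval_mul, g']
  ring

lemma SMonicOPS.jacobiOp_eq {p : ℕ → ℂ[X]} (ha : -1 < a) (hb : -1 < b)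
    (hp : SMonicOPS (Ioo (-1) 1) (jacobiW a b) p) (k : ℕ) :
    jacobiOp a b (p k) = C (-((k : ℂ) * (k + a + b + 1))) * p k := by
  rw [hp.apply_eq_C_mul_of_symm (isScalarWeight_jacobiW ha hb) (sInner_jacobiOp_comm ha hb)
    (natDegree_jacobiOp_le a b) k]
  have h := coeff_jacobiOp_natDegree a b (p k)
  rw [(hp.1 k).1.leadingCoeff, mul_one, (hp.1 k).2] at h
  rw [h]

end JacobiSymm

/-- The coefficient of `(x - 1)ⁱ` in the solution of `jacobiOp a b f = -ν (ν + a + b + 1) f`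
normalised by `f 1 = 1`, as a polynomial in `ν`: the terms of the hypergeometric series
`₂F₁(-ν, ν + a + b + 1; a + 1; (1 - x) / 2)`. -/
noncomputable def jacobiCoeffPoly (a b : ℂ) : ℕ → ℂ[X]
  | 0 => 1
  | i + 1 => jacobiCoeffPoly a b i * C ((2 * (i + 1) * (i + 1 + a))⁻¹)
      * ((X - C (i : ℂ)) * (X + C (i + a + b + 1)))

section JacobiCoeffPoly

variable {a b : ℂ}

lemma jacobiCoeffPoly_comp_reflect (i : ℕ) :
    (jacobiCoeffPoly a b i).comp (C (-(a + b + 1)) - X) = jacobiCoeffPoly a b i := by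
  induction i with
  | zero => simp [jacobiCoeffPoly]
  | succ i ih =>
    simp only [jacobiCoeffPoly, mul_comp, sub_comp, add_comp, C_comp, X_comp, ih]
    simp only [C_add, C_neg, C_1]
    ring

lemma coeff_taylor_of_jacobiOp_eq (ha : ∀ i : ℕ, (i : ℂ) + 1 + a ≠ 0) {ν : ℂ}
    {f : ℂ[X]} (hf : jacobiOp a b f = C (-(ν * (ν + a + b + 1))) * f) (i : ℕ) :
    (taylor 1 f).coeff i = f.eval 1 * (jacobiCoeffPoly a b i).eval ν := by
  induction i with
  | zero => simp [jacobiCoeffPoly, taylor_coeff_zero]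
  | succ i ih =>
    have h := congrArg (fun g => (taylor 1 g).coeff i) hf
    simp only [coeff_taylor_jacobiOp, taylor_mul, taylor_C, coeff_C_mul] at h
    have hd : (2 : ℂ) * (i + 1) * (i + 1 + a) ≠ 0 :=
      mul_ne_zero (mul_ne_zero two_ne_zero (Nat.cast_add_one_ne_zero i)) (ha i)
    have hrec : (taylor 1 f).coeff (i + 1) = (2 * (i + 1) * (i + 1 + a))⁻¹
        * ((ν - i) * (ν + (i + a + b + 1))) * (taylor 1 f).coeff i := by
      rw [mul_assoc, eq_inv_mul_iff_mul_eq₀ hd]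
      linear_combination -h
    rw [hrec, ih]
    simp only [jacobiCoeffPoly, eval_mul, eval_C, eval_sub, eval_add, eval_X]
    ring

lemma eval_one_ne_zero_of_jacobiOp_eq (ha : ∀ i : ℕ, (i : ℂ) + 1 + a ≠ 0) {ν : ℂ}
    {f : ℂ[X]} (hf : jacobiOp a b f = C (-(ν * (ν + a + b + 1))) * f) (hf0 : f ≠ 0) :
    f.eval 1 ≠ 0 := by
  intro h
  apply hf0
  rw [← taylor_eq_zero (r := 1)]
  ext i
  rw [coeff_taylor_of_jacobiOp_eq ha hf, h, zero_mul, coeff_zero]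

lemma jacobiCoeffPoly_one_comp_reflect_ne {m : ℕ} (hm : m ≠ 0) (ha : a + m + 1 ≠ 0) :
    (jacobiCoeffPoly (a + m) b 1).comp (C (-(a + b + 1)) - X) ≠ jacobiCoeffPoly (a + m) b 1 := by
  intro h
  have e₀ := congrArg (eval 0) h
  have e₁ := congrArg (eval (m : ℂ)) h
  simp only [jacobiCoeffPoly, eval_comp, eval_mul, eval_C, eval_sub, eval_add, eval_X, eval_one,
    Nat.cast_zero] at e₀ e₁
  have hd : (2 * (0 + 1) * (0 + 1 + (a + m)))⁻¹ ≠ (0 : ℂ) := by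
    apply inv_ne_zero
    simp only [zero_add, mul_one]
    exact mul_ne_zero two_ne_zero (by rwa [add_comm])
  rw [one_mul] at e₀ e₁
  have h₀ : (a + b + 1) * m = 0 := by
    linear_combination -mul_left_cancel₀ hd e₀
  have h₁ : (m : ℂ) * m = 0 := by
    linear_combination (-1 / 2 : ℂ) * mul_left_cancel₀ hd e₁ - (1 / 2 : ℂ) * h₀
  exact hm (by exact_mod_cast mul_self_eq_zero.mp h₁)

end JacobiCoeffPoly

lemma natCast_add_one_add_ofReal_ne_zero {a : ℝ} (ha : -1 < a) (i : ℕ) :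
    (i : ℂ) + 1 + a ≠ 0 := by
  have : (0 : ℝ) < i + 1 + a := by linarith [(Nat.cast_nonneg i : (0 : ℝ) ≤ i)]
  exact_mod_cast this.ne'

namespace SMonicOPS

variable {a b : ℝ} {p : ℕ → ℂ[X]}

lemma coeff_taylor_jacobi (ha : -1 < a) (hb : -1 < b)
    (hp : SMonicOPS (Ioo (-1) 1) (jacobiW a b) p) (k i : ℕ) :
    (taylor 1 (p k)).coeff i = (p k).eval 1 * (jacobiCoeffPoly a b i).eval (k : ℂ) :=
  coeff_taylor_of_jacobiOp_eq (natCast_add_one_add_ofReal_ne_zero ha) (hp.jacobiOp_eq ha hb k) i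

lemma eval_one_ne_zero_jacobi (ha : -1 < a) (hb : -1 < b)
    (hp : SMonicOPS (Ioo (-1) 1) (jacobiW a b) p) (k : ℕ) : (p k).eval 1 ≠ 0 :=
  eval_one_ne_zero_of_jacobiOp_eq (natCast_add_one_add_ofReal_ne_zero ha) (hp.jacobiOp_eq ha hb k)
    (hp.1 k).1.ne_zero

end SMonicOPS

section DiffOp

lemma taylor_iterate_derivative {R : Type*} [CommSemiring R] (r : R) (j : ℕ) (f : R[X]) :
    taylor r (derivative^[j] f) = derivative^[j] (taylor r f) :=
  Function.Commute.iterate_right (fun g => (derivative_taylor r g).symm) j f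

lemma taylor_sAct (r : ℂ) (F : ℕ →₀ ℂ[X]) (f : ℂ[X]) :
    taylor r (sAct F f) = sAct (F.mapRange (taylor r) (map_zero _)) (taylor r f) := by
  unfold sAct
  rw [Finsupp.sum_mapRange_index (by simp), map_finsuppSum]
  simp only [taylor_mul, taylor_iterate_derivative]

noncomputable def sActLinear (F : ℕ →₀ ℂ[X]) : ℂ[X] →ₗ[ℂ] ℂ[X] :=
  F.sum fun j c => LinearMap.mulRight ℂ c ∘ₗ (derivative ^ j)

lemma sActLinear_apply (F : ℕ →₀ ℂ[X]) (f : ℂ[X]) : sActLinear F f = sAct F f := by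
  simp [sActLinear, sAct, Finsupp.sum, Module.End.pow_apply]

variable {F : ℕ →₀ ℂ[X]} {n : ℕ}

lemma coeff_sAct_X_pow_eq_zero (hF : ∀ j ∈ F.support, j ≤ n) {i l : ℕ} (h : i + n < l) :
    (sAct F (X ^ l)).coeff i = 0 := by
  rw [sAct, Finsupp.sum, finsetSum_coeff]
  refine Finset.sum_eq_zero fun j hj => ?_
  rw [iterate_derivative_X_pow_eq_C_mul, mul_assoc, coeff_C_mul, coeff_X_pow_mul',
    if_neg (by have := hF j hj; omega), mul_zero]

lemma coeff_sAct_eq_sum (hF : ∀ j ∈ F.support, j ≤ n) (f : ℂ[X]) (i : ℕ) :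
    (sAct F f).coeff i =
      ∑ l ∈ Finset.range (i + n + 1), f.coeff l * (sAct F (X ^ l)).coeff i := by
  set M := f.natDegree + 1 + (i + n + 1)
  have hsum :
      (sAct F f).coeff i = ∑ l ∈ Finset.range M, f.coeff l * (sAct F (X ^ l)).coeff i := by
    conv_lhs => rw [← sActLinear_apply, f.as_sum_range' M (by omega)]
    rw [map_sum, finsetSum_coeff]
    refine Finset.sum_congr rfl fun l _ => ?_
    rw [← C_mul_X_pow_eq_monomial, ← smul_eq_C_mul, map_smul, coeff_smul, smul_eq_mul,
      sActLinear_apply]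
  rw [hsum]
  refine (Finset.sum_subset (Finset.range_subset_range.mpr (by omega)) fun l _ hl => ?_).symm
  rw [coeff_sAct_X_pow_eq_zero hF (by simpa using hl), mul_zero]

end DiffOp

theorem comp_eq_of_coeff_sAct_eq {F : ℕ →₀ ℂ[X]} {A B : ℕ → ℂ[X]} {σ : ℂ[X]}
    (hA : ∀ l, (A l).comp σ = A l) (hB : B 0 = 1) {P : ℕ → ℂ[X]} {u v : ℕ → ℂ}
    (hu : ∀ k, u k ≠ 0) (hv : ∀ k, v k ≠ 0)
    (hP : ∀ k i, (P k).coeff i = u k * (A i).eval (k : ℂ))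
    (hPB : ∀ k i, (sAct F (P k)).coeff i = v k * (B i).eval (k : ℂ)) (i : ℕ) :
    (B i).comp σ = B i := by
  set n := F.support.sup id
  have hF : ∀ j ∈ F.support, j ≤ n := fun j hj => Finset.le_sup (f := id) hj
  -- `F` is banded, so only `A 0, …, A (i + n)` contribute to the `i`-th coefficient
  set E : ℕ → ℂ[X] := fun i =>
    ∑ l ∈ Finset.range (i + n + 1), C ((sAct F (X ^ l)).coeff i) * A l
  have hE : ∀ k i, u k * (E i).eval (k : ℂ) = v k * (B i).eval (k : ℂ) := by
    intro k i
    rw [← hPB, coeff_sAct_eq_sum hF]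
    simp only [E, eval_finsetSum, eval_mul, eval_C, Finset.mul_sum, hP]
    exact Finset.sum_congr rfl fun l _ => by ring
  have hE0 : E 0 ≠ 0 := fun h => hv 0 (by simpa [h, hB] using (hE 0 0).symm)
  have hEi : E i = E 0 * B i := by
    refine eq_of_infinite_eval_eq _ _
      (Set.infinite_of_injective_forall_mem Nat.cast_injective fun k => ?_)
    refine mul_left_cancel₀ (hu k) ?_
    simp only [eval_mul, hE, ← mul_assoc]
    rw [hB, eval_one, mul_one]
  have hσ : ∀ i, (E i).comp σ = E i := fun i => by
    simp only [E, sum_comp, mul_comp, C_comp, hA]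
  refine mul_left_cancel₀ hE0 ?_
  calc E 0 * (B i).comp σ = (E 0 * B i).comp σ := by rw [mul_comp, hσ]
    _ = E 0 * B i := by rw [← hEi, hσ]

/-- for Jacobi weights with `α, β > -1` and `m ≥ 1`, the weight
`w_{α+m,β}` is not a Darboux transformation of `w_{α,β}`. -/
theorem stmt16 (α β : ℝ) (hα : -1 < α) (hβ : -1 < β) (m : ℕ) (hm : 0 < m)
    (p q : ℕ → Polynomial ℂ)
    (hp : SMonicOPS (Set.Ioo (-1) 1) (jacobiW α β) p)
    (hq : SMonicOPS (Set.Ioo (-1) 1) (jacobiW (α + m) β) q) :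
    ¬ SDarboux p q := by
  rintro ⟨V, -, ⟨⟨F, hF⟩, -⟩, -, -, hc⟩
  choose c hc0 hcV using hc
  have hαm : -1 < α + m := by linarith [(Nat.cast_nonneg m : (0 : ℝ) ≤ m)]
  have hsymm := comp_eq_of_coeff_sAct_eq (F := F.mapRange (taylor 1) (map_zero _))
    (B := jacobiCoeffPoly ((α + m : ℝ) : ℂ) β) jacobiCoeffPoly_comp_reflect rfl
    (hp.eval_one_ne_zero_jacobi hα hβ)
    (fun k => mul_ne_zero (hc0 k) (hq.eval_one_ne_zero_jacobi hαm hβ k))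
    (hp.coeff_taylor_jacobi hα hβ)
    (fun k i => by rw [← taylor_sAct, ← hF, hcV, taylor_mul, taylor_C, coeff_C_mul,
      hq.coeff_taylor_jacobi hαm hβ, mul_assoc]) 1
  push_cast at hsymm
  exact jacobiCoeffPoly_one_comp_reflect_ne hm.ne'
    (by exact_mod_cast (by linarith : α + m + 1 ≠ 0)) hsymm
end
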